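/- The homogeneous quartic polynomial P = −x_0^2·x_1^2 + x_0^3·x_2 − x_1^3·x_2 + x_0·x_1·x_2^2 − 5·x_2^4 is irreducible in the polynomial ring ℂ[x_0, x_1, x_2]. -/

import Mathlib

/-!
Read as a polynomial in `x₀` over `R = ℂ[x₁, x₂]`, the quartic is the cubic
`z T³ - y² T² + y z² T - (y³ z + 5 z⁴)` with `y = x₁`, `z = x₂`. Its coefficients `z` and `y²` are
coprime, so it is primitive and can only split off a linear factor `a T + b`, where `a` divides the
prime `z`. If `a` is a unit, `-b / a ∈ R` is a root, and reducing the root equation modulo `z`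
twice forces `z ∣ y`. If `a` is `z` up to a unit, the cofactor is `T² + p T + q` and comparing
coefficients gives `p ((y² + z p)² + y z³) = 5 z⁵`; the second factor is prime to `z`, so
`z⁵ ∣ p`, and then `5` would lie in the ideal `(y, z)`.
-/

section CubicFactorization

open Polynomial

theorem Polynomial.IsPrimitive.irreducible_of_natDegree_eq_three {R : Type*} [CommSemiring R]
    [NoZeroDivisors R] {f : R[X]} (hf : f.IsPrimitive) (h3 : f.natDegree = 3)
    (hlin : ∀ g h : R[X], g.natDegree = 1 → f ≠ g * h) : Irreducible f := by
  have isUnit_of_natDegree_eq_zero : ∀ g h : R[X], f = g * h → g.natDegree = 0 → IsUnit g := by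
    intro g h hgh hg
    rw [eq_C_of_natDegree_eq_zero hg, isUnit_C]
    exact hf _ (eq_C_of_natDegree_eq_zero hg ▸ Dvd.intro h hgh.symm)
  refine ⟨fun hu => by simp [natDegree_eq_zero_of_isUnit hu] at h3, fun g h hgh => ?_⟩
  have hf0 : f ≠ 0 := ne_zero_of_natDegree_gt (n := 0) (by omega)
  have hdeg : g.natDegree + h.natDegree = 3 := by
    rw [← natDegree_mul (left_ne_zero_of_mul (hgh ▸ hf0)) (right_ne_zero_of_mul (hgh ▸ hf0)),
      ← hgh, h3]
  rcases (by omega : g.natDegree = 0 ∨ g.natDegree = 1 ∨ h.natDegree = 1 ∨ h.natDegree = 0)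
    with hg | hg | hh | hh
  · exact .inl (isUnit_of_natDegree_eq_zero g h hgh hg)
  · exact absurd hgh (hlin g h hg)
  · exact absurd (hgh.trans (mul_comm g h)) (hlin h g hh)
  · exact .inr (isUnit_of_natDegree_eq_zero h g (hgh.trans (mul_comm g h)) hh)

theorem Cubic.linear_mul_quadratic {R : Type*} [CommSemiring R] (a b c d e : R) :
    ((C a * X + C b) * (C c * X ^ 2 + C d * X + C e) : R[X]) =
      Cubic.toPoly ⟨a * c, a * d + b * c, a * e + b * d, b * e⟩ := by
  simp only [Cubic.toPoly, map_add, map_mul]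
  ring

end CubicFactorization

namespace X0_45

open Polynomial

variable {R : Type*} [CommRing R] [IsDomain R] {y z c : R}

def cubic (y z c : R) : Cubic R := ⟨z, -y ^ 2, y * z ^ 2, -(y ^ 3 * z + c * z ^ 4)⟩

theorem isPrimitive_cubic (hz : Prime z) (hzy : ¬z ∣ y) : (cubic y z c).toPoly.IsPrimitive := by
  intro r hr
  rw [C_dvd_iff_dvd_coeff] at hr
  have hrz : r ∣ z := by simpa [cubic, Cubic.coeff_eq_a] using hr 3
  have hry : r ∣ y ^ 2 := by simpa [cubic, Cubic.coeff_eq_b] using hr 2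
  refine (hz.irreducible.dvd_iff.mp hrz).resolve_right fun hassoc => hzy ?_
  exact hz.dvd_of_dvd_pow (hassoc.dvd.trans hry)

/-- The coefficients of `(X - C t) * (C z * X ^ 2 + C p * X + C q)`. -/
theorem cubic_ne_X_sub_C_mul (hz : Prime z) (hzy : ¬z ∣ y) (t p q : R) :
    cubic y z c ≠ ⟨z, p - t * z, q - t * p, -(t * q)⟩ := by
  intro h
  obtain ⟨-, h2, h1, h0⟩ := Cubic.mk.inj h
  have hroot : y ^ 2 * t ^ 2 = z * (t ^ 3 + y * z * t - y ^ 3 - c * z ^ 3) := by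
    linear_combination -(t ^ 2 * h2 + t * h1 + h0)
  obtain ⟨s, rfl⟩ : z ∣ t := by
    have hyt : z ∣ y * t :=
      hz.dvd_of_dvd_pow (n := 2) (by rw [mul_pow, hroot]; exact dvd_mul_right _ _)
    exact (hz.dvd_or_dvd hyt).resolve_left hzy
  refine hzy (hz.dvd_of_dvd_pow (n := 3) ⟨z ^ 2 * s ^ 3 - y ^ 2 * s ^ 2 + y * z * s - c * z ^ 2, ?_⟩)
  apply mul_left_cancel₀ hz.ne_zero
  linear_combination hroot

/-- The coefficients of `(C z * X + C b) * (X ^ 2 + C p * X + C q)`. -/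
theorem cubic_ne_C_mul_X_add_C_mul (hz : Prime z) (hzy : ¬z ∣ y) (hc : c ∉ Ideal.span {y, z})
    (b p q : R) : cubic y z c ≠ ⟨z, z * p + b, z * q + b * p, b * q⟩ := by
  intro h
  obtain ⟨-, h2, h1, h0⟩ := Cubic.mk.inj h
  obtain rfl : b = -y ^ 2 - z * p := by linear_combination -h2
  set Q := (y ^ 2 + z * p) ^ 2 + y * z ^ 3 with hQ
  have hpQ : p * Q = c * z ^ 5 := by
    linear_combination z * h0 + (y ^ 2 + z * p) * h1
  have hzQ : ¬z ∣ Q := by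
    intro hd
    refine hzy (hz.dvd_of_dvd_pow (n := 2) ((dvd_add_left (dvd_mul_right z p)).mp ?_))
    exact hz.dvd_of_dvd_pow (n := 2) ((dvd_add_left ⟨y * z ^ 2, by ring⟩).mp hd)
  obtain ⟨k, rfl⟩ := hz.pow_dvd_of_dvd_mul_right 5 hzQ ⟨c, by rw [hpQ, mul_comm]⟩
  have hkQ : k * Q = c := by
    apply mul_left_cancel₀ (pow_ne_zero 5 hz.ne_zero)
    linear_combination hpQ
  apply hc
  rw [← hkQ, ← Ideal.Quotient.eq_zero_iff_mem]
  have hyI : Ideal.Quotient.mk (Ideal.span {y, z}) y = 0 :=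
    Ideal.Quotient.eq_zero_iff_mem.mpr (Ideal.subset_span (by simp))
  have hzI : Ideal.Quotient.mk (Ideal.span {y, z}) z = 0 :=
    Ideal.Quotient.eq_zero_iff_mem.mpr (Ideal.subset_span (by simp))
  simp [hQ, hyI, hzI]

theorem toPoly_cubic_ne_mul (hz : Prime z) (hzy : ¬z ∣ y) (hc : c ∉ Ideal.span {y, z})
    {g h : R[X]} (hg : g.natDegree = 1) : (cubic y z c).toPoly ≠ g * h := by
  intro hgh
  have hf : (cubic y z c).toPoly ≠ 0 := Cubic.ne_zero_of_a_ne_zero hz.ne_zero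
  have hh : h.natDegree ≤ 2 := by
    have := natDegree_mul (left_ne_zero_of_mul (hgh ▸ hf)) (right_ne_zero_of_mul (hgh ▸ hf))
    rw [← hgh, Cubic.natDegree_of_a_ne_zero hz.ne_zero, hg] at this
    omega
  rw [eq_X_add_C_of_natDegree_le_one hg.le, eq_quadratic_of_degree_le_two
    (degree_le_of_natDegree_le hh), Cubic.linear_mul_quadratic, Cubic.toPoly_injective] at hgh
  generalize g.coeff 1 = a, g.coeff 0 = b, h.coeff 2 = c₂, h.coeff 1 = c₁, h.coeff 0 = c₀ at hgh
  have hz_eq : z = a * c₂ := (Cubic.mk.inj hgh).1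
  rcases hz.dvd_or_dvd (hz_eq ▸ dvd_rfl : z ∣ a * c₂) with ⟨a', rfl⟩ | ⟨c', rfl⟩
  · have hunit : a' * c₂ = 1 :=
      mul_left_cancel₀ hz.ne_zero (by linear_combination -hz_eq)
    refine cubic_ne_C_mul_X_add_C_mul hz hzy hc (b * c₂) (a' * c₁) (a' * c₀) (hgh.trans ?_)
    rw [Cubic.mk.injEq]
    refine ⟨hz_eq.symm, by ring, by linear_combination -b * c₁ * hunit,
      by linear_combination -b * c₀ * hunit⟩
  · have hunit : a * c' = 1 :=
      mul_left_cancel₀ hz.ne_zero (by linear_combination -hz_eq)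
    refine cubic_ne_X_sub_C_mul hz hzy (-(b * c')) (a * c₁) (a * c₀) (hgh.trans ?_)
    rw [Cubic.mk.injEq]
    refine ⟨hz_eq.symm, by ring, by linear_combination -b * c₁ * hunit,
      by linear_combination -b * c₀ * hunit⟩

theorem irreducible_toPoly_cubic (hz : Prime z) (hzy : ¬z ∣ y) (hc : c ∉ Ideal.span {y, z}) :
    Irreducible (cubic y z c).toPoly :=
  (isPrimitive_cubic hz hzy).irreducible_of_natDegree_eq_three
    (Cubic.natDegree_of_a_ne_zero hz.ne_zero) fun _ _ hg => toPoly_cubic_ne_mul hz hzy hc hg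

end X0_45

open MvPolynomial X0_45

theorem finSuccEquiv_quartic :
    finSuccEquiv ℂ 2 (-(X 0) ^ 2 * (X 1) ^ 2 + (X 0) ^ 3 * (X 2) - (X 1) ^ 3 * (X 2)
        + (X 0) * (X 1) * (X 2) ^ 2 - 5 * (X 2) ^ 4) = (cubic (X 0) (X 1) 5).toPoly := by
  have h1 : (X 1 : MvPolynomial (Fin 3) ℂ) = X (Fin.succ 0) := rfl
  have h2 : (X 2 : MvPolynomial (Fin 3) ℂ) = X (Fin.succ 1) := rfl
  simp only [h1, h2, map_add, map_sub, map_mul, map_pow, map_neg, map_ofNat,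
    finSuccEquiv_X_zero, finSuccEquiv_X_succ, cubic, Cubic.toPoly]
  ring

theorem X_one_not_dvd_X_zero : ¬(X 1 : MvPolynomial (Fin 2) ℂ) ∣ X 0 := by
  rintro ⟨q, hq⟩
  simpa using congrArg (MvPolynomial.eval ![1, 0]) hq

theorem five_notMem_span_X : (5 : MvPolynomial (Fin 2) ℂ) ∉ Ideal.span {X 0, X 1} := by
  intro h
  have hker : Ideal.span {X 0, X 1} ≤ RingHom.ker (MvPolynomial.eval (0 : Fin 2 → ℂ)) := by
    rw [Ideal.span_le]
    rintro _ (rfl | rfl) <;> simp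
  simpa [map_ofNat] using hker h

/-- The homogeneous quartic `−x₀²x₁² + x₀³x₂ − x₁³x₂ + x₀x₁x₂² − 5x₂⁴`
(the plane model equation of `X₀(45)`) is irreducible in `ℂ[x₀, x₁, x₂]`. -/
theorem stmt_12 :
    Irreducible (-(X 0) ^ 2 * (X 1) ^ 2 + (X 0) ^ 3 * (X 2) - (X 1) ^ 3 * (X 2)
        + (X 0) * (X 1) * (X 2) ^ 2 - 5 * (X 2) ^ 4 :
      MvPolynomial (Fin 3) ℂ) := by
  rw [← MulEquiv.irreducible_iff (finSuccEquiv ℂ 2), finSuccEquiv_quartic]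
  exact irreducible_toPoly_cubic X_prime X_one_not_dvd_X_zero five_notMem_span_X
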